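/- arXiv:1412.6364 — 2 statements merged into one kernel-verified Lean document; each statement's English description precedes it below -/
import Mathlib

section
/- Let λ be a partition of length r and let n ≥ |λ| − r. If n ∈ N_λ then the polynomial P_n has degree exactly n; if n ∉ N_λ (i.e. n = |λ| + λ_j − j for some j) then P_n vanishes identically. -/
open Polynomial

/-- The physicists' Hermite polynomials: `H 0 = 1`, `H (n+1) = 2X * H n - (H n)'`. -/
noncomputable def physHermite : ℕ → Polynomial ℝ
  | 0 => 1
  | n + 1 => 2 * X * physHermite n - derivative (physHermite n)

/-- Wronskian determinant of a finite family of polynomials. -/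
noncomputable def Wron {m : ℕ} (f : Fin m → Polynomial ℝ) : Polynomial ℝ :=
  Matrix.det (Matrix.of fun i j : Fin m => (fun p => derivative p)^[(i : ℕ)] (f j))

/-- `lam : Fin r → ℕ` is a partition: weakly decreasing with positive parts. -/
def IsPartition (r : ℕ) (lam : Fin r → ℕ) : Prop :=
  (∀ i j : Fin r, i ≤ j → lam j ≤ lam i) ∧ ∀ i, 1 ≤ lam i

/-- An even (double) partition: `r` even and `λ_{2k-1} = λ_{2k}`. -/
def IsEvenPartition (r : ℕ) (lam : Fin r → ℕ) : Prop :=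
  IsPartition r lam ∧ Even r ∧
    ∀ k : ℕ, ∀ h : 2 * k + 1 < r, lam ⟨2 * k, by omega⟩ = lam ⟨2 * k + 1, h⟩

/-- The generalized Hermite polynomial `H_λ = Wr[H_{λ_r}, H_{λ_{r-1}+1}, …, H_{λ_1+r-1}]`. -/
noncomputable def genHermite (r : ℕ) (lam : Fin r → ℕ) : Polynomial ℝ :=
  Wron fun j : Fin r => physHermite (lam (Fin.rev j) + j)

/-- The exceptional Hermite polynomial
`P_n = Wr[H_{λ_r}, H_{λ_{r-1}+1}, …, H_{λ_1+r-1}, H_{n-|λ|+r}]`. -/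
noncomputable def XHermite (r : ℕ) (lam : Fin r → ℕ) (n : ℕ) : Polynomial ℝ :=
  Wron fun j : Fin (r + 1) =>
    if h : (j : ℕ) < r then physHermite (lam (Fin.rev ⟨(j : ℕ), h⟩) + j)
    else physHermite (n + r - ∑ i, lam i)

/-- The degree sequence `N_λ`: `n ≥ |λ| - r` and `n ≠ |λ| + λ_j - j` for `j = 1, …, r`. -/
def XDegSeq (r : ℕ) (lam : Fin r → ℕ) (n : ℕ) : Prop :=
  (∑ i, lam i) ≤ n + r ∧ ∀ i : Fin r, n ≠ (∑ i, lam i) + lam i - ((i : ℕ) + 1)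

/- ### Auxiliary lemmas -/

lemma physHermite_natDegree_coeff (k : ℕ) :
    (physHermite k).natDegree = k ∧ (physHermite k).coeff k = 2 ^ k := by
  induction k with
  | zero => simp [physHermite]
  | succ n ih =>
    obtain ⟨hdeg, hc⟩ := ih
    have h2 : (2 : Polynomial ℝ) * X * physHermite n = C 2 * (X * physHermite n) := by
      rw [map_ofNat]; ring
    have hco : (2 * X * physHermite n - derivative (physHermite n)).coeff (n + 1)
        = 2 ^ (n + 1) := by
      rw [coeff_sub, h2, coeff_C_mul, coeff_X_mul, hc, coeff_derivative,
        coeff_eq_zero_of_natDegree_lt (by omega : (physHermite n).natDegree < n + 1 + 1)]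
      ring
    have hle : (2 * X * physHermite n - derivative (physHermite n)).natDegree ≤ n + 1 := by
      refine (natDegree_sub_le _ _).trans (max_le ?_ ?_)
      · rw [h2]
        refine (natDegree_C_mul_le _ _).trans (natDegree_mul_le.trans ?_)
        rw [natDegree_X, hdeg]
        omega
      · have := natDegree_derivative_le (physHermite n)
        omega
    have hne : (2 * X * physHermite n - derivative (physHermite n)).coeff (n + 1) ≠ 0 := by
      rw [hco]; positivity
    have : physHermite (n + 1) = 2 * X * physHermite n - derivative (physHermite n) := rfl
    rw [this]
    exact ⟨le_antisymm hle (le_natDegree_of_ne_zero hne), hco⟩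

lemma physHermite_natDegree (k : ℕ) : (physHermite k).natDegree = k :=
  (physHermite_natDegree_coeff k).1

lemma physHermite_ne_zero (k : ℕ) : physHermite k ≠ 0 := by
  intro h
  have := (physHermite_natDegree_coeff k).2
  rw [h, coeff_zero] at this
  exact (by positivity : (0:ℝ) < 2 ^ k).ne this

lemma coeff_prod_sum {ι : Type*} (s : Finset ι) (f : ι → Polynomial ℝ) (d : ι → ℕ)
    (h : ∀ i ∈ s, (f i).natDegree ≤ d i) :
    (∏ i ∈ s, f i).coeff (∑ i ∈ s, d i) = ∏ i ∈ s, (f i).coeff (d i) := by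
  induction s using Finset.cons_induction with
  | empty => simp
  | cons a s ha ih =>
    rw [Finset.prod_cons, Finset.sum_cons,
      coeff_mul_add_eq_of_natDegree_le (h a (Finset.mem_cons_self a s))
        ((natDegree_prod_le _ _).trans (Finset.sum_le_sum fun i hi => h i (Finset.mem_cons_of_mem hi))),
      ih fun i hi => h i (Finset.mem_cons_of_mem hi), Finset.prod_cons]

/-- Key lemma: the Wronskian of polynomials with pairwise distinct degrees `d j` has
degree `∑ d j - (m choose 2)`. -/
lemma Wron_degree {m : ℕ} (f : Fin m → Polynomial ℝ) (d : Fin m → ℕ) (D : ℕ)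
    (hd : ∀ j, (f j).natDegree = d j) (hf : ∀ j, f j ≠ 0)
    (hinj : Function.Injective d)
    (hD : D + ∑ i : Fin m, (i : ℕ) = ∑ i, d i) :
    (Wron f).degree = D := by
  classical
  set c : Fin m → ℝ := fun j => (f j).coeff (d j) with hcdef
  have hc0 : ∀ j, c j ≠ 0 := by
    intro j
    have : (f j).coeff ((f j).natDegree) ≠ 0 := by
      rw [coeff_natDegree]; exact leadingCoeff_ne_zero.mpr (hf j)
    rwa [hd j] at this
  have key : ∀ σ : Equiv.Perm (Fin m),
      ((∏ i, (⇑derivative)^[(σ i : ℕ)] (f i)).degree ≤ (D : WithBot ℕ)) ∧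
      ((∏ i, (⇑derivative)^[(σ i : ℕ)] (f i)).coeff D
        = ∏ i, (c i * ((d i).descFactorial (σ i) : ℝ))) := by
    intro σ
    by_cases hcase : ∀ i, (σ i : ℕ) ≤ d i
    · have hsig : ∑ i : Fin m, ((σ i : ℕ)) = ∑ i : Fin m, (i : ℕ) :=
        Equiv.sum_comp σ fun i => (i : ℕ)
      have hsum : ∑ i : Fin m, (d i - (σ i : ℕ)) = D := by
        have h2 : ∑ i : Fin m, (d i - (σ i : ℕ)) + ∑ i : Fin m, ((σ i : ℕ))
            = ∑ i : Fin m, d i := by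
          rw [← Finset.sum_add_distrib]
          exact Finset.sum_congr rfl fun i _ => Nat.sub_add_cancel (hcase i)
        omega
      have hdeg : ∀ i : Fin m, ((⇑derivative)^[(σ i : ℕ)] (f i)).natDegree ≤ d i - (σ i : ℕ) :=
        fun i => (natDegree_iterate_derivative _ _).trans (by rw [hd i])
      constructor
      · refine degree_le_natDegree.trans ?_
        have h1 : (∏ i, (⇑derivative)^[(σ i : ℕ)] (f i)).natDegree ≤ D := by
          refine (natDegree_prod_le _ _).trans ?_
          rw [← hsum]
          exact Finset.sum_le_sum fun i _ => hdeg i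
        exact_mod_cast Nat.cast_le.mpr h1
      · rw [← hsum, coeff_prod_sum _ _ _ fun i _ => hdeg i]
        refine Finset.prod_congr rfl fun i _ => ?_
        rw [coeff_iterate_derivative, Nat.sub_add_cancel (hcase i), hcdef]
        simp [nsmul_eq_mul, mul_comm]
    · push_neg at hcase
      obtain ⟨i, hi⟩ := hcase
      have hzero : (⇑derivative)^[(σ i : ℕ)] (f i) = 0 :=
        iterate_derivative_eq_zero (by rw [hd i]; exact hi)
      have hp0 : (∏ j, (⇑derivative)^[(σ j : ℕ)] (f j)) = 0 :=
        Finset.prod_eq_zero (Finset.mem_univ i) hzero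
      have hr0 : (∏ j, (c j * ((d j).descFactorial (σ j) : ℝ))) = 0 := by
        refine Finset.prod_eq_zero (Finset.mem_univ i) ?_
        rw [Nat.descFactorial_eq_zero_iff_lt.mpr hi]
        simp
      rw [hp0, hr0]
      simp
  have hwron : Wron f = ∑ σ : Equiv.Perm (Fin m),
      ((Equiv.Perm.sign σ : ℤ) : Polynomial ℝ) * ∏ i, (⇑derivative)^[(σ i : ℕ)] (f i) := by
    rw [Wron, Matrix.det_apply']
    rfl
  have hub : (Wron f).degree ≤ (D : WithBot ℕ) := by
    rw [hwron]
    refine (degree_sum_le _ _).trans (Finset.sup_le fun σ _ => ?_)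
    refine degree_mul_le _ _ |>.trans ?_
    calc degree ((Equiv.Perm.sign σ : ℤ) : Polynomial ℝ)
          + degree (∏ i, (⇑derivative)^[(σ i : ℕ)] (f i))
        ≤ 0 + (D : WithBot ℕ) := add_le_add (degree_intCast_le _) (key σ).1
      _ = (D : WithBot ℕ) := by rw [zero_add]
  have hB : (Wron f).coeff D
      = Matrix.det (Matrix.of fun i j : Fin m => c j * ((d j).descFactorial (i : ℕ) : ℝ)) := by
    rw [hwron, finset_sum_coeff, Matrix.det_apply']
    refine Finset.sum_congr rfl fun σ _ => ?_
    rw [← C_eq_intCast, coeff_C_mul, (key σ).2]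
    rfl
  have hBval : Matrix.det (Matrix.of fun i j : Fin m => c j * ((d j).descFactorial (i : ℕ) : ℝ))
      = (∏ i, c i) * (Matrix.vandermonde fun j => (d j : ℝ)).det := by
    refine (Matrix.det_mul_row c (Matrix.of fun i j : Fin m => ((d j).descFactorial (i : ℕ) : ℝ))).trans ?_
    congr 1
    have htr : (Matrix.of fun i j : Fin m => ((d j).descFactorial (i : ℕ) : ℝ))
        = (Matrix.of fun i j : Fin m =>
            ((descPochhammer ℝ (j : ℕ)).eval ((d i : ℝ)))).transpose := by
      ext i j
      rw [Matrix.transpose_apply, Matrix.of_apply, Matrix.of_apply,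
        descPochhammer_eval_eq_descFactorial]
    show Matrix.det (Matrix.of fun i j : Fin m => ((d j).descFactorial (i : ℕ) : ℝ))
      = (Matrix.vandermonde fun j => (d j : ℝ)).det
    rw [htr, Matrix.det_transpose]
    exact (Matrix.det_eval_matrixOfPolynomials_eq_det_vandermonde (fun j => ((d j : ℝ)))
      (fun i => descPochhammer ℝ (i : ℕ))
      (fun i => descPochhammer_natDegree ℝ (i : ℕ)) (fun i => monic_descPochhammer ℝ _)).symm
  have hV : (Matrix.vandermonde fun j => (d j : ℝ)).det ≠ 0 := by
    rw [Matrix.det_vandermonde]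
    refine Finset.prod_ne_zero_iff.mpr fun i _ => Finset.prod_ne_zero_iff.mpr fun j hj => ?_
    have hij : i ≠ j := by
      intro h; rw [h] at hj; exact absurd (Finset.mem_Ioi.mp hj) (lt_irrefl _)
    have hdd : d j ≠ d i := fun h => hij (hinj h).symm
    intro h
    have : ((d j : ℝ)) = (d i : ℝ) := sub_eq_zero.mp h
    exact hdd (by exact_mod_cast this)
  have hC : (Wron f).coeff D ≠ 0 := by
    rw [hB, hBval]
    exact mul_ne_zero (Finset.prod_ne_zero_iff.mpr fun i _ => hc0 i) hV
  exact le_antisymm hub (le_degree_of_ne_zero hC)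

/-- For `n ≥ |λ| - r`: if `n ∈ N_λ` then `P_n` has degree exactly `n`, and
if `n ∉ N_λ` then `P_n` vanishes identically. -/
theorem XHermite_degree
    (r : ℕ) (lam : Fin r → ℕ) (hpart : IsPartition r lam)
    (n : ℕ) (hn : (∑ i, lam i) ≤ n + r) :
    (XDegSeq r lam n → (XHermite r lam n).degree = n) ∧
    (¬ XDegSeq r lam n → XHermite r lam n = 0) := by
  classical
  set S : ℕ := ∑ i, lam i with hSdef
  have hrS : r ≤ S := by
    calc r = ∑ _i : Fin r, 1 := by simp
      _ ≤ ∑ i, lam i := Finset.sum_le_sum fun i _ => hpart.2 i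
  set d : Fin (r + 1) → ℕ := fun j =>
    if h : (j : ℕ) < r then lam (Fin.rev ⟨(j : ℕ), h⟩) + j else n + r - S with hddef
  set F : Fin (r + 1) → Polynomial ℝ := fun j =>
    if h : (j : ℕ) < r then physHermite (lam (Fin.rev ⟨(j : ℕ), h⟩) + j)
    else physHermite (n + r - S) with hFdef
  have hFd : ∀ j, F j = physHermite (d j) := by
    intro j
    by_cases h : (j : ℕ) < r <;> simp [hFdef, hddef, h]
  have hXW : XHermite r lam n = Wron F := rfl
  constructor
  · rintro ⟨-, hNe⟩
    rw [hXW]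
    refine Wron_degree F d n (fun j => by rw [hFd j, physHermite_natDegree])
      (fun j => by rw [hFd j]; exact physHermite_ne_zero _) ?_ ?_
    · -- injectivity of d
      have hmono : ∀ a b : Fin (r + 1), (ha : (a : ℕ) < r) → (hb : (b : ℕ) < r) →
          (a : ℕ) < (b : ℕ) → d a < d b := by
        intro a b ha hb hab
        have h1 : lam (Fin.rev ⟨(a : ℕ), ha⟩) ≤ lam (Fin.rev ⟨(b : ℕ), hb⟩) := by
          refine hpart.1 _ _ ?_
          rw [Fin.le_def, Fin.val_rev, Fin.val_rev]
          show r - ((b : ℕ) + 1) ≤ r - ((a : ℕ) + 1)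
          omega
        simp only [hddef, dif_pos ha, dif_pos hb]
        omega
      have hlast : ∀ a : Fin (r + 1), (ha : (a : ℕ) < r) → d a ≠ n + r - S := by
        intro a ha hEq
        simp only [hddef, dif_pos ha] at hEq
        refine hNe (Fin.rev ⟨(a : ℕ), ha⟩) ?_
        have hiv : ((Fin.rev ⟨(a : ℕ), ha⟩ : Fin r) : ℕ) = r - ((a : ℕ) + 1) := by
          rw [Fin.val_rev]
        omega
      intro a b hab
      by_cases ha : (a : ℕ) < r <;> by_cases hb : (b : ℕ) < r
      · rcases lt_trichotomy (a : ℕ) (b : ℕ) with h | h | h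
        · exact absurd hab (hmono a b ha hb h).ne
        · exact Fin.ext h
        · exact absurd hab.symm (hmono b a hb ha h).ne
      · have hbv : d b = n + r - S := by simp [hddef, hb]
        exact absurd (hbv ▸ hab) (hlast a ha)
      · have hav : d a = n + r - S := by simp [hddef, ha]
        exact absurd (hav ▸ hab.symm) (hlast b hb)
      · exact Fin.ext (by omega)
    · -- degree count
      have hsplit : ∑ j : Fin (r + 1), d j
          = (∑ j : Fin r, (lam (Fin.rev j) + (j : ℕ))) + (n + r - S) := by
        rw [Fin.sum_univ_castSucc]
        congr 1
        · refine Finset.sum_congr rfl fun j _ => ?_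
          have hj : ((Fin.castSucc j : Fin (r + 1)) : ℕ) < r := by
            simp [Fin.coe_castSucc, j.isLt]
          simp only [hddef, dif_pos hj]
          rfl
        · simp [hddef]
      have hrev : ∑ j : Fin r, lam (Fin.rev j) = S := by
        rw [hSdef]
        exact Fintype.sum_bijective Fin.rev Fin.rev_bijective _ _ fun x => rfl
      have hidx : ∑ j : Fin (r + 1), (j : ℕ) = (∑ j : Fin r, (j : ℕ)) + r := by
        rw [Fin.sum_univ_castSucc]
        simp [Fin.coe_castSucc]
      rw [hsplit, Finset.sum_add_distrib, hrev, hidx]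
      omega
  · intro hnot
    rw [XDegSeq] at hnot
    push_neg at hnot
    obtain ⟨i, hi⟩ := hnot hn
    have hir : (i : ℕ) < r := i.isLt
    set j0 : Fin (r + 1) := ⟨r - 1 - (i : ℕ), by omega⟩ with hj0def
    have hj0v : ((j0 : Fin (r + 1)) : ℕ) = r - 1 - (i : ℕ) := rfl
    have hj0r : ((j0 : ℕ)) < r := by rw [hj0v]; omega
    have hrevj0 : Fin.rev ⟨(j0 : ℕ), hj0r⟩ = i := by
      apply Fin.ext
      rw [Fin.val_rev]
      show r - ((j0 : ℕ) + 1) = (i : ℕ)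
      rw [hj0v]
      omega
    have hFF : F j0 = F (Fin.last r) := by
      have hlr : ¬ ((Fin.last r : Fin (r + 1)) : ℕ) < r := by simp
      simp only [hFdef, dif_pos hj0r, dif_neg hlr]
      rw [hrevj0]
      congr 1
      rw [← hSdef] at hi
      omega
    rw [hXW, Wron]
    refine Matrix.det_zero_of_column_eq (i := j0) (j := Fin.last r) ?_ fun k => ?_
    · intro h
      have : ((j0 : ℕ)) = r := by rw [h]; rfl
      omega
    · simp only [Matrix.of_apply]
      exact congrArg _ hFF
end

section
/- Let λ be an even partition of length r. Then H_λ is an even polynomial, and for every n ≥ |λ|−r the exceptional Hermite polynomial P_n has the same parity as n; that is, P_n(−x) = (−1)^n P_n(x) for all x. -/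
open Polynomial

lemma deriv_comp_negX (p : Polynomial ℝ) :
    derivative (p.comp (-X)) = - (derivative p).comp (-X) := by
  rw [derivative_comp]
  simp

lemma physHermite_succ (n : ℕ) :
    physHermite (n + 1) = 2 * X * physHermite n - derivative (physHermite n) := by
  rw [physHermite]

lemma physHermite_comp_neg (n : ℕ) :
    (physHermite n).comp (-X) = (-1) ^ n * physHermite n := by
  induction n with
  | zero => simp [physHermite]
  | succ n ih =>
      have hd : (derivative (physHermite n)).comp (-X)
          = - derivative ((physHermite n).comp (-X)) := by
        rw [deriv_comp_negX]; ring
      rw [physHermite_succ, sub_comp, mul_comp, mul_comp, hd, ih]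
      have h1 : ((-1 : Polynomial ℝ) ^ n) = C ((-1 : ℝ) ^ n) := by simp
      rw [h1, derivative_C_mul]
      simp only [X_comp]
      rw [show (2 : Polynomial ℝ).comp (-X) = 2 from by norm_num, ← h1]
      ring

lemma iter_deriv_comp_negX (p : Polynomial ℝ) (i : ℕ) :
    (fun q : Polynomial ℝ => derivative q)^[i] (p.comp (-X))
      = (-1) ^ i * ((fun q : Polynomial ℝ => derivative q)^[i] p).comp (-X) := by
  induction i with
  | zero => simp
  | succ i ih =>
      rw [Function.iterate_succ_apply', ih]
      have h1 : ((-1 : Polynomial ℝ) ^ i) = C ((-1 : ℝ) ^ i) := by simp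
      rw [h1, derivative_C_mul, deriv_comp_negX]
      have h2 : (fun q : Polynomial ℝ => derivative q)^[i + 1] p
          = derivative ((fun q : Polynomial ℝ => derivative q)^[i] p) :=
        Function.iterate_succ_apply' _ _ _
      rw [h2, ← h1]
      ring

lemma comp_neg_iter_deriv (p : Polynomial ℝ) (i : ℕ) :
    ((fun q : Polynomial ℝ => derivative q)^[i] p).comp (-X)
      = (-1) ^ i * (fun q : Polynomial ℝ => derivative q)^[i] (p.comp (-X)) := by
  rw [iter_deriv_comp_negX]
  have : ((-1 : Polynomial ℝ) ^ i) * ((-1 : Polynomial ℝ) ^ i) = 1 := by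
    rw [← pow_add]; exact Even.neg_one_pow ⟨i, rfl⟩
  rw [← mul_assoc, this, one_mul]

lemma Wron_comp_neg {m : ℕ} (f : Fin m → Polynomial ℝ) (e : Fin m → ℕ)
    (hf : ∀ j, (f j).comp (-X) = (-1) ^ (e j) * f j) :
    (Wron f).comp (-X) = (-1) ^ (∑ j : Fin m, ((j : ℕ) + e j)) * Wron f := by
  have key : (compRingHom (-X : Polynomial ℝ)).mapMatrix
        (Matrix.of fun i j : Fin m => (fun p => derivative p)^[(i : ℕ)] (f j))
      = (Matrix.diagonal (fun i : Fin m => (-1 : Polynomial ℝ) ^ (i : ℕ))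
          * Matrix.of (fun i j : Fin m => (fun p => derivative p)^[(i : ℕ)] (f j)))
          * Matrix.diagonal (fun j : Fin m => (-1 : Polynomial ℝ) ^ (e j)) := by
    ext i j
    rw [Matrix.mul_diagonal, Matrix.diagonal_mul]
    simp only [RingHom.mapMatrix_apply, Matrix.map_apply, Matrix.of_apply,
      coe_compRingHom_apply]
    rw [comp_neg_iter_deriv, hf j]
    have h1 : ((-1 : Polynomial ℝ) ^ (e j)) = C ((-1 : ℝ) ^ (e j)) := by simp
    rw [h1, iterate_derivative_C_mul, ← h1]
    ring
  have : (Wron f).comp (-X)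
      = ((compRingHom (-X : Polynomial ℝ)).mapMatrix
        (Matrix.of fun i j : Fin m => (fun p => derivative p)^[(i : ℕ)] (f j))).det := by
    rw [← RingHom.map_det]; rfl
  rw [this, key, Matrix.det_mul, Matrix.det_mul, Matrix.det_diagonal,
    Matrix.det_diagonal, Finset.prod_pow_eq_pow_sum, Finset.prod_pow_eq_pow_sum]
  rw [Finset.sum_add_distrib, pow_add]
  unfold Wron
  ring

lemma even_sum_range (s : ℕ) (g : ℕ → ℕ) (hg : ∀ k, g (2 * k) = g (2 * k + 1)) :
    Even (∑ i ∈ Finset.range (2 * s), g i) := by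
  induction s with
  | zero => simp
  | succ s ih =>
      have : 2 * (s + 1) = (2 * s) + 1 + 1 := by ring
      rw [this, Finset.sum_range_succ, Finset.sum_range_succ]
      have := hg s
      obtain ⟨t, ht⟩ := ih
      exact ⟨t + g (2 * s), by omega⟩

lemma even_partition_sum {r : ℕ} {lam : Fin r → ℕ} (h : IsEvenPartition r lam) :
    Even (∑ i, lam i) := by
  obtain ⟨-, ⟨s, hs⟩, hpair⟩ := h
  have hr : r = 2 * s := by omega
  subst hr
  set g : ℕ → ℕ := fun i => if h : i < 2 * s then lam ⟨i, h⟩ else 0 with hgdef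
  have hsum : (∑ i, lam i) = ∑ i ∈ Finset.range (2 * s), g i := by
    rw [Finset.sum_range]
    apply Finset.sum_congr rfl
    intro i _
    simp [hgdef, i.isLt]
  rw [hsum]
  apply even_sum_range
  intro k
  by_cases h1 : 2 * k + 1 < 2 * s
  · have h0 : 2 * k < 2 * s := by omega
    simp only [hgdef, dif_pos h1, dif_pos h0]
    exact hpair k h1
  · have h0 : ¬ (2 * k < 2 * s) := by omega
    simp [hgdef, h0, h1]

/-- For an even partition `λ`, `H_λ` is an even polynomial, and `P_n` has the
parity of `n`: `P_n(-x) = (-1)^n P_n(x)`. -/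
theorem XHermite_parity
    (r : ℕ) (lam : Fin r → ℕ) (hpart : IsEvenPartition r lam) :
    (∀ x : ℝ, (genHermite r lam).eval (-x) = (genHermite r lam).eval x) ∧
    ∀ n : ℕ, (∑ i, lam i) ≤ n + r →
      ∀ x : ℝ, (XHermite r lam n).eval (-x) = (-1) ^ n * (XHermite r lam n).eval x := by
  obtain ⟨t, ht⟩ := even_partition_sum hpart
  obtain ⟨s, hs⟩ := hpart.2.1
  have hr : r = 2 * s := by omega
  have hrev : (∑ j : Fin r, lam (Fin.rev j)) = ∑ i, lam i :=
    Equiv.sum_comp (Fin.revPerm) lam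
  constructor
  · intro x
    have hc := Wron_comp_neg (fun j : Fin r => physHermite (lam (Fin.rev j) + j))
      (fun j : Fin r => lam (Fin.rev j) + (j : ℕ))
      (fun j => physHermite_comp_neg _)
    have hsplit : (∑ j : Fin r, ((j : ℕ) + (lam (Fin.rev j) + (j : ℕ))))
        = 2 * (∑ j : Fin r, (j : ℕ)) + ∑ j : Fin r, lam (Fin.rev j) := by
      rw [Finset.mul_sum, ← Finset.sum_add_distrib]
      apply Finset.sum_congr rfl
      intro j _; ring
    have hE : Even (∑ j : Fin r, ((j : ℕ) + (lam (Fin.rev j) + (j : ℕ)))) := by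
      rw [hsplit, hrev]
      exact ⟨(∑ j : Fin r, (j : ℕ)) + t, by omega⟩
    have h1 : ((-1 : Polynomial ℝ) ^ (∑ j : Fin r, ((j : ℕ) + (lam (Fin.rev j) + (j : ℕ)))))
        = 1 := hE.neg_one_pow
    rw [h1, one_mul] at hc
    have := congrArg (eval x) hc
    rw [eval_comp] at this
    simpa [genHermite] using this
  · intro n hn x
    set N : ℕ := n + r - ∑ i, lam i with hN
    have hNd : (∑ i, lam i) + N = n + r := by omega
    have hc := Wron_comp_neg
      (fun j : Fin (r + 1) =>
        if h : (j : ℕ) < r then physHermite (lam (Fin.rev ⟨(j : ℕ), h⟩) + j)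
        else physHermite N)
      (fun j : Fin (r + 1) =>
        if h : (j : ℕ) < r then lam (Fin.rev ⟨(j : ℕ), h⟩) + (j : ℕ) else N)
      (by
        intro j
        by_cases h : (j : ℕ) < r
        · simp only [dif_pos h]
          exact physHermite_comp_neg _
        · simp only [dif_neg h]
          exact physHermite_comp_neg _)
    set E : ℕ := ∑ j : Fin (r + 1), ((j : ℕ) +
        if h : (j : ℕ) < r then lam (Fin.rev ⟨(j : ℕ), h⟩) + (j : ℕ) else N) with hEdef
    have hEeq : E = 2 * (∑ j : Fin r, (j : ℕ)) + (∑ i, lam i) + (r + N) := by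
      rw [hEdef, Fin.sum_univ_castSucc]
      have hlast : ((Fin.last r : Fin (r + 1)) : ℕ) = r := rfl
      rw [hlast, dif_neg (lt_irrefl r)]
      congr 1
      have : ∀ j : Fin r, (((Fin.castSucc j) : Fin (r+1)) : ℕ) = (j : ℕ) := fun j => rfl
      calc (∑ j : Fin r, (((Fin.castSucc j) : ℕ) +
              if h : ((Fin.castSucc j : Fin (r+1)) : ℕ) < r then
                lam (Fin.rev ⟨((Fin.castSucc j : Fin (r+1)) : ℕ), h⟩) + ((Fin.castSucc j : Fin (r+1)) : ℕ)
              else N))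
          = ∑ j : Fin r, ((j : ℕ) + (lam (Fin.rev j) + (j : ℕ))) := by
            apply Finset.sum_congr rfl
            intro j _
            rw [this j, dif_pos j.isLt]
        _ = 2 * (∑ j : Fin r, (j : ℕ)) + ∑ j : Fin r, lam (Fin.rev j) := by
            rw [Finset.mul_sum, ← Finset.sum_add_distrib]
            apply Finset.sum_congr rfl
            intro j _; ring
        _ = 2 * (∑ j : Fin r, (j : ℕ)) + ∑ i, lam i := by rw [hrev]
    have hEn : E = n + 2 * ((∑ j : Fin r, (j : ℕ)) + r) := by omega
    have h1 : ((-1 : Polynomial ℝ) ^ E) = (-1) ^ n := by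
      rw [hEn, pow_add, pow_mul]
      norm_num
    rw [h1] at hc
    have := congrArg (eval x) hc
    rw [eval_comp] at this
    simpa [XHermite] using this
end
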